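/- Let z : (0,∞) → ℂ be continuously differentiable with finite X-norm, where ‖z‖_X² = ∫₀^∞ (|z'(ρ)|² + |z(ρ)|²/ρ²) ρ dρ. Then z extends continuously to [0,∞] with z(0) = 0 and z(ρ) → 0 as ρ → ∞, and ‖z‖_{L^∞} ≤ C ‖z‖_X for a universal constant C. -/

import Mathlib

/-!
Put `f = ‖z‖²`. Since `|f'| ≤ 2‖z‖‖z'‖ ≤ (‖z'‖² + ‖z‖²/ρ²) ρ` and `f / ρ ≤ (‖z'‖² + ‖z‖²/ρ²) ρ`,
both `f'` and `f / ρ` are integrable on `(0, ∞)`. In the variable `t = log ρ` this says that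
`f ∘ exp` and its derivative are integrable on `ℝ`, which forces `f` to vanish at `0⁺` and at `∞`.
Then `f ρ = -∫_ρ^∞ f' ≤ ‖z‖_X²`, so `C = 1` works.
-/

open MeasureTheory Set Filter Topology Real

section

variable {E : Type*} [NormedAddCommGroup E] [NormedSpace ℝ E]

theorem integrable_exp_smul_comp_exp_iff (g : ℝ → E) :
    Integrable (fun t ↦ exp t • g (exp t)) ↔ IntegrableOn g (Ioi 0) := by
  rw [← integrableOn_univ, ← range_exp, ← image_univ]
  simpa [abs_of_pos (exp_pos _)] using (integrableOn_image_iff_integrableOn_abs_deriv_smul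
    MeasurableSet.univ (fun t _ ↦ (hasDerivAt_exp t).hasDerivWithinAt)
    exp_injective.injOn g).symm

theorem tendsto_zero_of_hasDerivAt_of_integrableOn_inv_smul {f f' : ℝ → E}
    (hderiv : ∀ x ∈ Ioi 0, HasDerivAt f (f' x) x) (hf' : IntegrableOn f' (Ioi 0))
    (hf : IntegrableOn (fun x ↦ x⁻¹ • f x) (Ioi 0)) :
    Tendsto f (𝓝[>] 0) (𝓝 0) ∧ Tendsto f atTop (𝓝 0) := by
  have hw' : ∀ t, HasDerivAt (f ∘ exp) (exp t • f' (exp t)) t := fun t ↦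
    (hderiv _ (exp_pos t)).scomp t (hasDerivAt_exp t)
  have hw'int : Integrable (fun t ↦ exp t • f' (exp t)) :=
    (integrable_exp_smul_comp_exp_iff f').2 hf'
  have hwint : Integrable (f ∘ exp) := by
    convert (integrable_exp_smul_comp_exp_iff _).2 hf using 2 with t
    rw [Function.comp_apply, smul_smul, mul_inv_cancel₀ (exp_pos t).ne', one_smul]
  have hw_atTop := tendsto_zero_of_hasDerivAt_of_integrableOn_Ioi (a := 0)
    (fun t _ ↦ hw' t) hw'int.integrableOn hwint.integrableOn
  have hw_atBot := tendsto_zero_of_hasDerivAt_of_integrableOn_Iic (a := 0)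
    (fun t _ ↦ hw' t) hw'int.integrableOn hwint.integrableOn
  have hf_eq : EqOn f (f ∘ exp ∘ log) (Ioi 0) := fun x hx ↦ by
    simp [exp_log (mem_Ioi.1 hx)]
  constructor
  · exact (hw_atBot.comp tendsto_log_nhdsGT_zero).congr'
      (eventuallyEq_nhdsWithin_of_eqOn hf_eq).symm
  · exact (hw_atTop.comp tendsto_log_atTop).congr'
      ((hf_eq.eventuallyEq_of_mem (Ioi_mem_atTop 0)).symm)

theorem norm_le_integral_norm_of_hasDerivAt_of_tendsto_zero [CompleteSpace E] {f f' : ℝ → E}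
    {a x : ℝ} (hderiv : ∀ y ∈ Ioi a, HasDerivAt f (f' y) y) (hf' : IntegrableOn f' (Ioi a))
    (hf : Tendsto f atTop (𝓝 0)) (hx : a < x) :
    ‖f x‖ ≤ ∫ y in Ioi a, ‖f' y‖ := by
  have hsub : Ioi x ⊆ Ioi a := Ioi_subset_Ioi hx.le
  have hFTC : ∫ y in Ioi x, f' y = 0 - f x := integral_Ioi_of_hasDerivAt_of_tendsto'
    (fun y hy ↦ hderiv y (hx.trans_le hy)) (hf'.mono_set hsub) hf
  calc ‖f x‖ = ‖∫ y in Ioi x, f' y‖ := by rw [hFTC, zero_sub, norm_neg]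
    _ ≤ ∫ y in Ioi x, ‖f' y‖ := norm_integral_le_integral_norm _
    _ ≤ ∫ y in Ioi a, ‖f' y‖ :=
      setIntegral_mono_set hf'.norm (.of_forall fun _ ↦ norm_nonneg _) hsub.eventuallyLE

end

theorem integrableOn_of_continuousOn_of_norm_le {E : Type*} [NormedAddCommGroup E] {f : ℝ → E}
    {g : ℝ → ℝ} {s : Set ℝ} (hs : MeasurableSet s) (hg : IntegrableOn g s)
    (hf : ContinuousOn f s) (hfg : ∀ x ∈ s, ‖f x‖ ≤ g x) : IntegrableOn f s :=
  hg.mono' (hf.aestronglyMeasurable hs) ((ae_restrict_iff' hs).2 (.of_forall hfg))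

theorem tendsto_zero_of_tendsto_norm_sq {α F : Type*} [SeminormedAddCommGroup F] {l : Filter α}
    {z : α → F} (hz : Tendsto (fun x ↦ ‖z x‖ ^ 2) l (𝓝 0)) : Tendsto z l (𝓝 0) := by
  refine tendsto_zero_iff_norm_tendsto_zero.2 ?_
  simpa [sqrt_sq (norm_nonneg _)] using hz.sqrt

section

variable {F : Type*} [NormedAddCommGroup F] (v w : F) {ρ : ℝ}

theorem abs_two_mul_inner_le_sq_add_sq_div_sq_mul [InnerProductSpace ℝ F] (hρ : 0 < ρ) :
    |2 * inner ℝ v w| ≤ (‖w‖ ^ 2 + ‖v‖ ^ 2 / ρ ^ 2) * ρ := by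
  have hAMGM : 2 * (‖v‖ * ‖w‖) ≤ (‖w‖ ^ 2 + ‖v‖ ^ 2 / ρ ^ 2) * ρ := by
    have : (‖w‖ ^ 2 + ‖v‖ ^ 2 / ρ ^ 2) * ρ - 2 * (‖v‖ * ‖w‖) = (ρ * ‖w‖ - ‖v‖) ^ 2 / ρ := by
      field_simp; ring
    nlinarith [div_nonneg (sq_nonneg (ρ * ‖w‖ - ‖v‖)) hρ.le]
  rw [abs_mul, abs_two]
  nlinarith [abs_real_inner_le_norm v w]

theorem norm_inv_smul_sq_norm_le_sq_add_sq_div_sq_mul (hρ : 0 < ρ) :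
    ‖ρ⁻¹ • ‖v‖ ^ 2‖ ≤ (‖w‖ ^ 2 + ‖v‖ ^ 2 / ρ ^ 2) * ρ := by
  have : ‖ρ⁻¹ • ‖v‖ ^ 2‖ = ‖v‖ ^ 2 / ρ ^ 2 * ρ := by
    rw [norm_smul, norm_inv, norm_pow, norm_norm, Real.norm_of_nonneg hρ.le]
    field_simp
  rw [this]
  gcongr
  exact le_add_of_nonneg_left (sq_nonneg _)

end

/-- Radial Sobolev embedding for the space `X`: if `z : (0,∞) → ℂ` is continuously
differentiable with finite `X`-norm, where
`‖z‖_X² = ∫₀^∞ (|z'(ρ)|² + |z(ρ)|²/ρ²) ρ dρ`, then `z(ρ) → 0` as `ρ → 0⁺` and as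
`ρ → ∞` (so `z` extends continuously by `0`), and `‖z‖_{L^∞} ≤ C ‖z‖_X` for a
universal constant `C`. -/
theorem X_space_embedding :
    ∃ C > (0 : ℝ), ∀ z : ℝ → ℂ,
      ContDiffOn ℝ 1 z (Ioi 0) →
      IntegrableOn (fun ρ => (‖deriv z ρ‖ ^ 2 + ‖z ρ‖ ^ 2 / ρ ^ 2) * ρ) (Ioi 0) volume →
      (Tendsto z (nhdsWithin 0 (Ioi 0)) (nhds 0) ∧
        Tendsto z atTop (nhds 0) ∧
        ∀ ρ ∈ Ioi (0 : ℝ), ‖z ρ‖ ≤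
          C * Real.sqrt (∫ ρ in Ioi (0 : ℝ), (‖deriv z ρ‖ ^ 2 + ‖z ρ‖ ^ 2 / ρ ^ 2) * ρ)) := by
  refine ⟨1, one_pos, fun z hz hint => ?_⟩
  set f' : ℝ → ℝ := fun ρ ↦ 2 * inner ℝ (z ρ) (deriv z ρ)
  have hderiv : ∀ ρ ∈ Ioi (0 : ℝ), HasDerivAt (fun ρ ↦ ‖z ρ‖ ^ 2) (f' ρ) ρ := fun ρ hρ ↦
    ((hz.differentiableOn one_ne_zero).differentiableAt
      (isOpen_Ioi.mem_nhds hρ)).hasDerivAt.norm_sq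
  have hf'int : IntegrableOn f' (Ioi 0) :=
    integrableOn_of_continuousOn_of_norm_le measurableSet_Ioi hint
      (continuousOn_const.mul (hz.continuousOn.inner
        (hz.continuousOn_deriv_of_isOpen isOpen_Ioi le_rfl)))
      fun ρ hρ ↦ abs_two_mul_inner_le_sq_add_sq_div_sq_mul _ _ hρ
  have hfint : IntegrableOn (fun ρ ↦ ρ⁻¹ • ‖z ρ‖ ^ 2) (Ioi 0) :=
    integrableOn_of_continuousOn_of_norm_le measurableSet_Ioi hint
      ((continuousOn_inv₀.mono fun ρ hρ ↦ (mem_Ioi.1 hρ).ne').smul (hz.continuousOn.norm.pow 2))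
      fun ρ hρ ↦ norm_inv_smul_sq_norm_le_sq_add_sq_div_sq_mul _ _ hρ
  obtain ⟨hzero, htop⟩ := tendsto_zero_of_hasDerivAt_of_integrableOn_inv_smul hderiv hf'int hfint
  refine ⟨tendsto_zero_of_tendsto_norm_sq hzero, tendsto_zero_of_tendsto_norm_sq htop,
    fun ρ hρ ↦ ?_⟩
  rw [one_mul]
  refine Real.le_sqrt_of_sq_le ?_
  calc ‖z ρ‖ ^ 2 ≤ ‖‖z ρ‖ ^ 2‖ := Real.le_norm_self _
    _ ≤ ∫ x in Ioi 0, ‖f' x‖ := norm_le_integral_norm_of_hasDerivAt_of_tendsto_zero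
        (f := fun x ↦ ‖z x‖ ^ 2) hderiv hf'int htop hρ
    _ ≤ _ := setIntegral_mono_on hf'int.norm hint measurableSet_Ioi
        fun x hx ↦ abs_two_mul_inner_le_sq_add_sq_div_sq_mul _ _ hx
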